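/- arXiv:2605.21681 — 5 statements merged into one kernel-verified Lean document; each statement's English description precedes it below -/
import Mathlib

section
/- Witt's extension theorem for symplectic spaces: let W be a finite-dimensional symplectic vector space over a finite field, X ⊆ W a subspace, and α : X → W an injective linear map that is isometric (ω(α(x),α(y)) = ω(x,y) for all x,y ∈ X). Then α extends to a symplectic automorphism of W (a linear bijection preserving ω). -/
/-!
Extend `α` one vector at a time. For `v ∉ X`, nondegeneracy makes the conditions
`ω (α x) w = ω x v` solvable, with solution set a coset `w₀ + α(X)ᗮ`, and
`x + c • v ↦ α x + c • w` is then isometric; it is injective as soon as `w ∉ α(X)`.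
If the whole coset lies in `α(X)`, then `α(X)ᗮ ≤ α(X)`. Since `α` maps the radical `X ⊓ Xᗮ`
onto that of `α(X)`, counting dimensions gives `Xᗮ ≤ X`, and writing `w₀ = α u` shows
`v - u ∈ Xᗮ ≤ X`, contradicting `v ∉ X`.
-/

open Module LinearMap.BilinForm

section

variable {k W : Type*} [Field k] [AddCommGroup W] [Module k W] {ω : W →ₗ[k] W →ₗ[k] k}

theorem map_comap_subtype_orthogonal {X : Submodule k W} (β : X →ₗ[k] W)
    (hiso : ∀ x y : X, ω (β x) (β y) = ω x y) :
    ((orthogonal ω X).comap X.subtype).map β = β.range ⊓ orthogonal ω β.range := by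
  have key : ∀ x : X, β x ∈ orthogonal ω β.range ↔ (x : W) ∈ orthogonal ω X := by
    refine fun x ↦ ⟨fun hx y hy ↦ ?_, fun hx _ ⟨y, hy⟩ ↦ ?_⟩
    · simpa [hiso] using hx _ (LinearMap.mem_range_self β ⟨y, hy⟩)
    · simpa [← hy, hiso] using hx _ y.2
  ext r
  constructor
  · rintro ⟨x, hx, rfl⟩
    exact ⟨LinearMap.mem_range_self β x, (key x).2 hx⟩
  · rintro ⟨⟨x, rfl⟩, hx⟩
    exact ⟨x, (key x).1 hx, rfl⟩

theorem finrank_inf_orthogonal_eq_of_isometry {X : Submodule k W} {β : X →ₗ[k] W}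
    (hinj : Function.Injective β) (hiso : ∀ x y : X, ω (β x) (β y) = ω x y) :
    finrank k ↥(X ⊓ orthogonal ω X) = finrank k ↥(β.range ⊓ orthogonal ω β.range) := by
  rw [← map_comap_subtype_orthogonal β hiso, ← Submodule.map_comap_subtype,
    (Submodule.equivMapOfInjective _ X.injective_subtype _).finrank_eq.symm,
    (Submodule.equivMapOfInjective _ hinj _).finrank_eq]

namespace LinearPMap

variable {v w : W}

theorem exists_supSpanSingleton_apply (f : W →ₗ.[k] W) (hv : v ∉ f.domain)
    (z : (f.supSpanSingleton v w hv).domain) :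
    ∃ (x : f.domain) (c : k),
      (z : W) = x + c • v ∧ f.supSpanSingleton v w hv z = f x + c • w := by
  obtain ⟨z, hz⟩ := z
  obtain ⟨x, hx, _, hs, rfl⟩ := Submodule.mem_sup.1 hz
  obtain ⟨c, rfl⟩ := Submodule.mem_span_singleton.1 hs
  exact ⟨⟨x, hx⟩, c, rfl, f.supSpanSingleton_apply_mk v w hv x hx c⟩

theorem injective_supSpanSingleton {f : W →ₗ.[k] W} (hinj : Function.Injective f)
    (hv : v ∉ f.domain) (hw : w ∉ f.toFun.range) :
    Function.Injective (f.supSpanSingleton v w hv) := by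
  refine (injective_iff_map_eq_zero (f.supSpanSingleton v w hv).toFun).2 fun z hz ↦ ?_
  obtain ⟨x, c, hz', hfz⟩ := f.exists_supSpanSingleton_apply hv z
  change f.supSpanSingleton v w hv z = 0 at hz
  rw [hfz] at hz
  rcases eq_or_ne c 0 with rfl | hc
  · rw [zero_smul, add_zero] at hz
    rw [Subtype.ext_iff, hz', (injective_iff_map_eq_zero f.toFun).1 hinj x hz]
    simp
  · refine absurd ⟨-c⁻¹ • x, ?_⟩ hw
    change f (-c⁻¹ • x) = w
    rw [f.map_smul, eq_neg_of_add_eq_zero_left hz, smul_neg, neg_smul, neg_neg, inv_smul_smul₀ hc]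

theorem isometry_supSpanSingleton (hω : ω.IsAlt) {f : W →ₗ.[k] W}
    (hiso : ∀ x y : f.domain, ω (f x) (f y) = ω x y) (hv : v ∉ f.domain)
    (hw : ∀ x : f.domain, ω (f x) w = ω x v) (z z' : (f.supSpanSingleton v w hv).domain) :
    ω (f.supSpanSingleton v w hv z) (f.supSpanSingleton v w hv z') = ω z z' := by
  obtain ⟨x, c, hz, hfz⟩ := f.exists_supSpanSingleton_apply hv z
  obtain ⟨y, d, hz', hfz'⟩ := f.exists_supSpanSingleton_apply hv z'
  have hwy : ω w (f y) = ω v y := by rw [← hω.neg, hw, hω.neg]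
  rw [hz, hz', hfz, hfz']
  simp only [LinearMap.map_add, LinearMap.map_smul, LinearMap.add_apply, LinearMap.smul_apply,
    smul_eq_mul, hiso, hw, hwy, hω.self_eq_zero]

end LinearPMap

variable [FiniteDimensional k W]

theorem orthogonal_le_of_orthogonal_range_le (hnd : ω.Nondegenerate) {X : Submodule k W}
    {β : X →ₗ[k] W} (hinj : Function.Injective β) (hiso : ∀ x y : X, ω (β x) (β y) = ω x y)
    (h : orthogonal ω β.range ≤ β.range) :
    orthogonal ω X ≤ X := by
  have hrad : finrank k ↥(X ⊓ orthogonal ω X) = finrank k ↥(orthogonal ω X) := by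
    rw [finrank_inf_orthogonal_eq_of_isometry hinj hiso, inf_eq_right.2 h,
      finrank_orthogonal hnd, finrank_orthogonal hnd, LinearMap.finrank_range_of_inj hinj]
  rw [← Submodule.eq_of_le_of_finrank_le inf_le_right hrad.ge]
  exact inf_le_left

theorem exists_forall_apply_eq_of_injective (hnd : ω.Nondegenerate) {V : Type*} [AddCommGroup V]
    [Module k V] {β : V →ₗ[k] W} (hinj : Function.Injective β) (f : Dual k V) :
    ∃ w, ∀ x, ω w (β x) = f x := by
  obtain ⟨g, rfl⟩ := LinearMap.dualMap_surjective_of_injective hinj f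
  exact ⟨(toDual ω hnd).symm g, fun x ↦ apply_toDual_symm_apply g (β x)⟩

theorem exists_notMem_range_of_isometry (hω : ω.IsAlt) (hnd : ω.Nondegenerate)
    {X : Submodule k W} {β : X →ₗ[k] W} (hinj : Function.Injective β)
    (hiso : ∀ x y : X, ω (β x) (β y) = ω x y) {v : W} (hv : v ∉ X) :
    ∃ w ∉ β.range, ∀ x : X, ω (β x) w = ω x v := by
  obtain ⟨w₀, hw₀⟩ := exists_forall_apply_eq_of_injective hnd hinj ((ω v).domRestrict X)
  have key : ∀ x : X, ω (β x) w₀ = ω x v := fun x ↦ by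
    rw [← hω.neg, hw₀, LinearMap.domRestrict_apply, hω.neg]
  by_cases hw₀R : w₀ ∈ β.range
  swap
  · exact ⟨w₀, hw₀R, key⟩
  obtain ⟨u, rfl⟩ := hw₀R
  by_cases horth : orthogonal ω β.range ≤ β.range
  · have hvu : v - u ∈ orthogonal ω X := fun x hx ↦ by
      simp [← key ⟨x, hx⟩, hiso]
    have hvX := X.add_mem (orthogonal_le_of_orthogonal_range_le hnd hinj hiso horth hvu) u.2
    exact (hv (by simpa using hvX)).elim
  · obtain ⟨z, hz, hzR⟩ := SetLike.not_le_iff_exists.1 horth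
    refine ⟨β u + z, fun h ↦ hzR ?_, fun x ↦ ?_⟩
    · simpa using sub_mem h (LinearMap.mem_range_self β u)
    · rw [map_add, hz _ (LinearMap.mem_range_self β x), add_zero, key]

theorem LinearPMap.exists_linearEquiv_of_domain_eq_top {f : W →ₗ.[k] W}
    (hinj : Function.Injective f) (hf : f.domain = ⊤) :
    ∃ φ : W ≃ₗ[k] W, ∀ x : f.domain, φ x = f x :=
  ⟨.ofInjectiveEndo (f.toFun ∘ₗ (LinearEquiv.ofTop _ hf).symm.toLinearMap)
    (hinj.comp (LinearEquiv.ofTop _ hf).symm.injective), fun _ ↦ rfl⟩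

theorem LinearPMap.exists_symplectic_extension (hω : ω.IsAlt) (hnd : ω.Nondegenerate)
    (f : W →ₗ.[k] W) (hinj : Function.Injective f)
    (hiso : ∀ x y : f.domain, ω (f x) (f y) = ω x y) :
    ∃ φ : W ≃ₗ[k] W, (∀ v w, ω (φ v) (φ w) = ω v w) ∧ ∀ x : f.domain, φ x = f x := by
  by_cases htop : f.domain = ⊤
  · obtain ⟨φ, hφ⟩ := f.exists_linearEquiv_of_domain_eq_top hinj htop
    refine ⟨φ, fun v w ↦ ?_, hφ⟩
    have hv : v ∈ f.domain := htop ▸ Submodule.mem_top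
    have hw : w ∈ f.domain := htop ▸ Submodule.mem_top
    simpa only [← hφ] using hiso ⟨v, hv⟩ ⟨w, hw⟩
  obtain ⟨v, hv⟩ := SetLike.exists_not_mem_of_ne_top f.domain htop
  obtain ⟨w, hwR, hw⟩ := exists_notMem_range_of_isometry hω hnd hinj hiso hv
  have hlt : finrank k f.domain < finrank k (f.supSpanSingleton v w hv).domain :=
    Submodule.finrank_lt_finrank_of_lt (SetLike.lt_iff_le_and_exists.2
      ⟨le_sup_left, v, Submodule.mem_sup_right (Submodule.mem_span_singleton_self v), hv⟩)
  obtain ⟨φ, hφω, hφ⟩ := (f.supSpanSingleton v w hv).exists_symplectic_extension hω hnd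
    (injective_supSpanSingleton hinj hv hwR) (isometry_supSpanSingleton hω hiso hv hw)
  exact ⟨φ, hφω, fun x ↦ (hφ ⟨x, Submodule.mem_sup_left x.2⟩).trans
    (f.supSpanSingleton_apply_mk_of_mem w hv x.2)⟩
termination_by finrank k W - finrank k f.domain
decreasing_by
  have := (f.supSpanSingleton v w hv).domain.finrank_le
  omega

end

theorem stmt5_general {k W : Type*} [Field k] [AddCommGroup W] [Module k W]
    [FiniteDimensional k W]
    (ω : W →ₗ[k] W →ₗ[k] k)
    (halt : ∀ v, ω v v = 0)
    (hnd : ∀ v, (∀ u, ω v u = 0) → v = 0)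
    (X : Submodule k W) (α : X →ₗ[k] W) (hinj : Function.Injective α)
    (hiso : ∀ x y : X, ω (α x) (α y) = ω (x : W) (y : W)) :
    ∃ φ : W ≃ₗ[k] W, (∀ v w, ω (φ v) (φ w) = ω v w) ∧ ∀ x : X, φ (x : W) = α x := by
  have hω : ω.IsAlt := halt
  have hnd' : ω.Nondegenerate := hω.isRefl.nondegenerate_iff_separatingLeft.2 hnd
  exact LinearPMap.exists_symplectic_extension hω hnd' ⟨X, α⟩ hinj hiso

/-- Witt's extension theorem for symplectic spaces: if `W` is a finite-dimensional
symplectic vector space over a finite field, `X ⊆ W` a subspace and `α : X → W` an injective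
isometric linear map, then `α` extends to a symplectic automorphism of `W`. -/
theorem stmt5 {k W : Type*} [Field k] [Fintype k] [AddCommGroup W] [Module k W]
    [FiniteDimensional k W]
    (ω : W →ₗ[k] W →ₗ[k] k)
    (halt : ∀ v, ω v v = 0)
    (hnd : ∀ v, (∀ u, ω v u = 0) → v = 0)
    (X : Submodule k W) (α : X →ₗ[k] W) (hinj : Function.Injective α)
    (hiso : ∀ x y : X, ω (α x) (α y) = ω (x : W) (y : W)) :
    ∃ φ : W ≃ₗ[k] W, (∀ v w, ω (φ v) (φ w) = ω v w) ∧ ∀ x : X, φ (x : W) = α x :=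
  stmt5_general ω halt hnd X α hinj hiso
end

section
/- The number of orbits of d-tuples of vectors in an infinite-dimensional vector space over a finite field with q elements, under the action of the group of linear automorphisms, equals the sum over m from 0 to d of the Gaussian q-binomial coefficient [d choose m]_q. -/
/-!
A tuple `v : ι → V` is determined up to `GL(V)` by the kernel of `piEquiv v : (ι → k) →ₗ V`,
the space of its linear relations. Indeed, two tuples with the same relations have isomorphic
finite-dimensional spans, and such an isomorphism extends to `V` because, `V` being
infinite-dimensional, every complement of a finite-dimensional subspace has dimension `dim V`.
Conversely every subspace `U` of `k^d` occurs, since `k^d ⧸ U` embeds into `V`. So the orbits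
are counted by the subspaces of `k^d`, and counting linearly independent `m`-tuples in `k^d`
according to the subspace they span shows that `[d choose m]_q` subspaces have dimension `m`.
-/

/-- The Gaussian `q`-binomial coefficient `[d choose m]_q`, defined as
`∏_{i=1}^{m} (q^{d-m+i} − 1)/(q^i − 1)` for `m ≤ d` and `0` otherwise. -/
noncomputable def gaussBinomial (q : ℚ) (d m : ℕ) : ℚ :=
  if m ≤ d then ∏ i ∈ Finset.range m, (q ^ (d - m + i + 1) - 1) / (q ^ (i + 1) - 1) else 0

open Module Finset LinearMap

theorem Nat.card_eq_sum_card_fiber {α β : Type*} [Finite α] (f : α → β) {t : Finset β}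
    (hf : ∀ a, f a ∈ t) : Nat.card α = ∑ b ∈ t, Nat.card {a // f a = b} := by
  classical
  have := Fintype.ofFinite α
  rw [Nat.card_eq_fintype_card, ← Finset.card_univ, card_eq_sum_card_fiberwise fun a _ => hf a]
  simp [Nat.card_eq_fintype_card, Fintype.card_subtype]

theorem gaussBinomial_mul_prod {q : ℚ} (hq : 1 < q) {d m : ℕ} (hm : m ≤ d) :
    gaussBinomial q d m * ∏ i ∈ range m, (q ^ m - q ^ i) = ∏ i ∈ range m, (q ^ d - q ^ i) := by
  have reflect (e : ℕ) (he : m ≤ e) : ∏ i ∈ range m, (q ^ e - q ^ i) =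
      ∏ i ∈ range m, q ^ (m - 1 - i) * (q ^ (e - m + i + 1) - 1) := by
    rw [← prod_range_reflect]
    refine prod_congr rfl fun i hi => ?_
    rw [mul_sub, ← pow_add, mul_one]
    congr 2
    have := mem_range.1 hi
    omega
  rw [gaussBinomial, if_pos hm, reflect m le_rfl, reflect d hm, ← prod_mul_distrib]
  refine prod_congr rfl fun i _ => ?_
  have : q ^ (i + 1) - 1 ≠ 0 := (sub_pos.2 (one_lt_pow₀ hq i.succ_ne_zero)).ne'
  rw [Nat.sub_self, zero_add]
  field_simp

section Counting

variable {k W : Type*} [Field k] [AddCommGroup W] [Module k W]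

noncomputable def linearIndependentSpanEqEquiv [FiniteDimensional k W] {m : ℕ} {U : Submodule k W}
    (hU : finrank k U = m) :
    {s : {s : Fin m → W // LinearIndependent k s} // Submodule.span k (Set.range s.1) = U} ≃
      {t : Fin m → U // LinearIndependent k t} where
  toFun s := ⟨fun i => ⟨s.1.1 i, s.2.le (Submodule.subset_span (Set.mem_range_self i))⟩,
    .of_comp U.subtype s.1.2⟩
  invFun t := ⟨⟨U.subtype ∘ t.1, t.2.map' U.subtype U.ker_subtype⟩, by
    rw [Set.range_comp, Submodule.span_image,
      t.2.span_eq_top_of_card_eq_finrank' (by simp [hU]), Submodule.map_subtype_top]⟩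
  left_inv s := rfl
  right_inv t := rfl

variable [Fintype k] [Finite W]

local notation "q" => Fintype.card k

theorem card_linearIndependent_eq_card_submodule_finrank_eq_mul (m : ℕ) :
    Nat.card {s : Fin m → W // LinearIndependent k s} =
      Nat.card {U : Submodule k W // finrank k U = m} * ∏ i : Fin m, (q ^ m - q ^ i.val) := by
  classical
  have := Fintype.ofFinite {U : Submodule k W // finrank k U = m}
  let spanOf (s : {s : Fin m → W // LinearIndependent k s}) :
      {U : Submodule k W // finrank k U = m} :=
    ⟨Submodule.span k (Set.range s.1), by rw [finrank_span_eq_card s.2, Fintype.card_fin]⟩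
  rw [Nat.card_eq_sum_card_fiber spanOf (t := univ) fun _ => mem_univ _, Nat.card_eq_fintype_card,
    ← Finset.card_univ, ← smul_eq_mul, ← sum_const]
  refine sum_congr rfl fun U _ => ?_
  rw [Nat.card_congr ((Equiv.subtypeEquivRight fun s => Subtype.ext_iff).trans
    (linearIndependentSpanEqEquiv U.2)), card_linearIndependent U.2.ge, U.2]

theorem card_submodule_finrank_eq_eq_gaussBinomial {m : ℕ} (hm : m ≤ finrank k W) :
    (Nat.card {U : Submodule k W // finrank k U = m} : ℚ) = gaussBinomial q (finrank k W) m := by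
  have hq : (1 : ℚ) < q := by exact_mod_cast Fintype.one_lt_card
  have cast_prod {n : ℕ} (hn : m ≤ n) :
      ((∏ i : Fin m, (q ^ n - q ^ i.val) : ℕ) : ℚ) = ∏ i ∈ range m, ((q : ℚ) ^ n - q ^ i) := by
    rw [Nat.cast_prod, Fin.prod_univ_eq_prod_range (fun i => ((q ^ n - q ^ i : ℕ) : ℚ))]
    refine prod_congr rfl fun i hi => ?_
    have := mem_range.1 hi
    rw [Nat.cast_sub (Nat.pow_le_pow_right Fintype.card_pos (by omega)), Nat.cast_pow, Nat.cast_pow]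
  have hcount := congrArg (Nat.cast : ℕ → ℚ)
    ((card_linearIndependent hm).symm.trans
      (card_linearIndependent_eq_card_submodule_finrank_eq_mul m))
  rw [Nat.cast_mul, cast_prod hm, cast_prod le_rfl, ← gaussBinomial_mul_prod hq hm] at hcount
  refine (mul_right_cancel₀ (prod_ne_zero_iff.2 fun i hi => ?_) hcount).symm
  exact sub_ne_zero.2 (pow_lt_pow_right₀ hq (mem_range.1 hi)).ne'

theorem card_submodule_eq_sum_gaussBinomial :
    (Nat.card (Submodule k W) : ℚ) =
      ∑ m ∈ range (finrank k W + 1), gaussBinomial q (finrank k W) m := by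
  rw [Nat.card_eq_sum_card_fiber (fun U : Submodule k W => finrank k U)
    fun U => mem_range.2 (Nat.lt_succ_of_le U.finrank_le), Nat.cast_sum]
  exact sum_congr rfl fun m hm =>
    card_submodule_finrank_eq_eq_gaussBinomial (Nat.lt_succ_iff.1 (mem_range.1 hm))

end Counting

open Cardinal

section Orbits

variable {k V : Type*} [Field k] [AddCommGroup V] [Module k V]

theorem rank_eq_of_isCompl_of_rank_lt {W C : Submodule k V} (h : IsCompl W C)
    (hV : ℵ₀ ≤ Module.rank k V) (hW : Module.rank k W < Module.rank k V) :
    Module.rank k C = Module.rank k V :=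
  eq_of_add_eq_of_aleph0_le (by rw [← rank_prod', (W.prodEquivOfIsCompl C h).rank_eq]) hW hV

theorem exists_linearEquiv_extend (hV : ℵ₀ ≤ Module.rank k V) {W W' : Submodule k V}
    (hW : Module.rank k W < Module.rank k V) (hW' : Module.rank k W' < Module.rank k V)
    (e : W ≃ₗ[k] W') : ∃ g : V ≃ₗ[k] V, ∀ x : W, g x = e x := by
  obtain ⟨C, hC⟩ := W.exists_isCompl
  obtain ⟨C', hC'⟩ := W'.exists_isCompl
  let f : C ≃ₗ[k] C' := .ofRankEq _ _ <|
    (rank_eq_of_isCompl_of_rank_lt hC hV hW).trans (rank_eq_of_isCompl_of_rank_lt hC' hV hW').symm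
  refine ⟨(W.prodEquivOfIsCompl C hC).symm ≪≫ₗ e.prodCongr f ≪≫ₗ W'.prodEquivOfIsCompl C' hC',
    fun x => ?_⟩
  simp

theorem exists_linearEquiv_comp_eq_of_ker_eq {M : Type*} [AddCommGroup M] [Module k M]
    [Module.Finite k M] (hV : ℵ₀ ≤ Module.rank k V) {f₁ f₂ : M →ₗ[k] V} (h : ker f₁ = ker f₂) :
    ∃ g : V ≃ₗ[k] V, g.toLinearMap ∘ₗ f₁ = f₂ := by
  let e := f₁.quotKerEquivRange.symm ≪≫ₗ Submodule.quotEquivOfEq _ _ h ≪≫ₗ f₂.quotKerEquivRange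
  have hrange (f : M →ₗ[k] V) : Module.rank k (range f) < Module.rank k V :=
    (rank_lt_aleph0 k _).trans_le hV
  obtain ⟨g, hg⟩ := exists_linearEquiv_extend hV (hrange f₁) (hrange f₂) e
  refine ⟨g, LinearMap.ext fun x => ?_⟩
  have hx : (⟨f₁ x, mem_range_self f₁ x⟩ : range f₁) =
      f₁.quotKerEquivRange (Submodule.Quotient.mk x) :=
    Subtype.ext (quotKerEquivRange_apply_mk _ _).symm
  simpa [e, hx] using hg ⟨f₁ x, mem_range_self f₁ x⟩

theorem exists_linearMap_ker_eq {M : Type*} [AddCommGroup M] [Module k M] [Module.Finite k M]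
    (hV : ℵ₀ ≤ Module.rank k V) (U : Submodule k M) : ∃ f : M →ₗ[k] V, ker f = U := by
  obtain ⟨j, hj⟩ := lift_rank_le_iff_exists_linearMap.1 <|
    (lift_lt_aleph0.2 (rank_lt_aleph0 k (M ⧸ U))).le.trans (aleph0_le_lift.2 hV)
  exact ⟨j ∘ₗ U.mkQ, by rw [ker_comp, ker_eq_bot.2 hj, Submodule.comap_bot, Submodule.ker_mkQ]⟩

variable {ι : Type*} [Finite ι]

theorem piEquiv_smul (g : V ≃ₗ[k] V) (v : ι → V) :
    piEquiv ι k V (g • v) = g.toLinearMap ∘ₗ piEquiv ι k V v :=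
  Basis.constr_comp _ _ _ _

theorem card_orbitRel_quotient_pi (hV : ℵ₀ ≤ Module.rank k V) :
    Nat.card (MulAction.orbitRel.Quotient (V ≃ₗ[k] V) (ι → V)) =
      Nat.card (Submodule k (ι → k)) := by
  let κ : MulAction.orbitRel.Quotient (V ≃ₗ[k] V) (ι → V) → Submodule k (ι → k) :=
    Quotient.lift (fun v => ker (piEquiv ι k V v)) fun v w ⟨g, hg⟩ => by
      rw [← hg, piEquiv_smul, LinearEquiv.ker_comp]
  refine Nat.card_congr (Equiv.ofBijective κ ⟨?_, fun U => ?_⟩)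
  · rintro ⟨v⟩ ⟨w⟩ h
    obtain ⟨g, hg⟩ := exists_linearEquiv_comp_eq_of_ker_eq hV h
    refine (Quotient.sound (MulAction.orbitRel_apply.2 ⟨g, (piEquiv ι k V).injective ?_⟩)).symm
    rw [piEquiv_smul, hg]
  · obtain ⟨f, hf⟩ := exists_linearMap_ker_eq hV U
    exact ⟨⟦(piEquiv ι k V).symm f⟧, by simp [κ, hf]⟩

end Orbits

/-- The number of orbits of `d`-tuples of vectors in a vector space of countably infinite
dimension over a finite field with `q` elements, under the diagonal action of the group of
linear automorphisms, equals `∑_{m=0}^{d} [d choose m]_q`. -/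
theorem stmt6 {k V : Type*} [Field k] [Fintype k] [AddCommGroup V] [Module k V]
    (bV : Module.Basis ℕ k V) (d : ℕ) :
    (Nat.card (MulAction.orbitRel.Quotient (V ≃ₗ[k] V) (Fin d → V)) : ℚ) =
      ∑ m ∈ Finset.range (d + 1), gaussBinomial (Fintype.card k) d m := by
  have hV : ℵ₀ ≤ Module.rank k V := by simpa using bV.mk_eq_rank.le
  rw [card_orbitRel_quotient_pi hV, card_submodule_eq_sum_gaussBinomial, finrank_fin_fun]
end

section
/- Define the symplectic graph on the symplectic F_2-vector space W_n of dimension 2n: vertices are all vectors, with an edge between v and w iff ω(v,w) = 1. Then the automorphism group of this graph is exactly the group of symplectic linear automorphisms of W_n; in particular, every graph automorphism is linear. -/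
/-- The automorphism group of the symplectic graph (vertices: the vectors of a
finite-dimensional symplectic `𝔽₂`-vector space `W`, edges: `ω v w = 1`) is exactly the group
of symplectic linear automorphisms of `W`: a bijection of the vertices preserves and reflects
the edge relation iff it is a symplectic linear automorphism.  In particular every graph
automorphism is linear. -/
theorem stmt8 {W : Type*} [AddCommGroup W] [Module (ZMod 2) W]
    [FiniteDimensional (ZMod 2) W]
    (ω : W →ₗ[ZMod 2] W →ₗ[ZMod 2] ZMod 2)
    (halt : ∀ v, ω v v = 0)
    (hnd : ∀ v, (∀ u, ω v u = 0) → v = 0)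
    (f : W ≃ W) :
    (∀ v w, ω (f v) (f w) = 1 ↔ ω v w = 1) ↔
      ∃ φ : W ≃ₗ[ZMod 2] W, (∀ v, φ v = f v) ∧ ∀ v w, ω (φ v) (φ w) = ω v w := by
  have h01 : ∀ x : ZMod 2, x = 0 ∨ x = 1 := by decide
  constructor
  · intro h
    -- upgrade to full equality of ω values
    have key : ∀ v w, ω (f v) (f w) = ω v w := by
      intro v w
      rcases h01 (ω v w) with hv | hv
      · rcases h01 (ω (f v) (f w)) with hf | hf
        · rw [hf, hv]
        · exfalso
          have := (h v w).mp hf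
          rw [hv] at this
          exact one_ne_zero this.symm
      · rw [hv, (h v w).mpr hv]
    -- additivity
    have hadd : ∀ v w, f (v + w) = f v + f w := by
      intro v w
      have hd : ∀ u, ω (f (v + w) - (f v + f w)) u = 0 := by
        intro u
        obtain ⟨t, rfl⟩ := f.surjective u
        simp only [map_sub, map_add, LinearMap.sub_apply, LinearMap.add_apply, key]
        abel
      have := hnd _ hd
      rw [sub_eq_zero] at this
      exact this
    have hzero : f 0 = 0 := by
      have := hadd 0 0
      rw [add_zero] at this
      exact (left_eq_add.mp this)
    have hsmul : ∀ (c : ZMod 2) (v : W), f (c • v) = c • f v := by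
      intro c v
      rcases h01 c with rfl | rfl
      · simp [hzero]
      · simp
    refine ⟨{ toFun := f, invFun := f.symm, map_add' := hadd, map_smul' := hsmul,
              left_inv := f.left_inv, right_inv := f.right_inv }, fun v => rfl, ?_⟩
    intro v w
    exact key v w
  · rintro ⟨φ, hφf, hφω⟩ v w
    rw [← hφf v, ← hφf w, hφω]
end

section
/- Let G be a group acting on a set X (the atoms), acting diagonally on X^I for a finite index set I. Suppose a : I → X and b : I → X are injective tuples with disjoint images, and for each i ∈ I there exists π_i ∈ G with π_i(a_i) = b_i and π_i fixing a_j, b_j for all j ≠ i. Define the 'cog' vector c = Σ_{J ⊆ I} (−1)^{|J|} · (the tuple whose i-th entry is b_i if i ∈ J, else a_i) in the free F-vector space on X^I. Then for every i ∈ I, the image of c under the linear map induced by projecting away the i-th coordinate (X^I → X^{I∖{i}}) is zero. -/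
/-- Cogs are balanced: let a group `G` act on a set `X` of atoms (diagonally on tuples
`X^I` for finite `I`), and let `a, b : I → X` be injective tuples with disjoint images such
that for each `i` some `π i ∈ G` maps `a i` to `b i` while fixing all other entries of `a`
and `b`.  Then the cog vector `Σ_{J ⊆ I} (−1)^{|J|} · (b on J, a elsewhere)` in the free
`F`-vector space on `X^I` maps to zero under the linear map induced by projecting away any
coordinate `i`. -/
theorem stmt13 {F G X I : Type*} [Field F] [Group G] [MulAction G X]
    [Fintype I] [DecidableEq I]
    (a b : I → X) (ha : Function.Injective a) (hb : Function.Injective b)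
    (hdisj : Disjoint (Set.range a) (Set.range b))
    (π : I → G)
    (hπab : ∀ i, π i • a i = b i)
    (hπa : ∀ i j, j ≠ i → π i • a j = a j)
    (hπb : ∀ i j, j ≠ i → π i • b j = b j)
    (i : I) :
    Finsupp.mapDomain (fun t : I → X => fun j : {j : I // j ≠ i} => t j)
      (∑ J : Finset I, ((-1 : F) ^ J.card) •
        Finsupp.single (fun m => if m ∈ J then b m else a m) (1 : F)) = 0 := by
  classical
  rw [Finsupp.mapDomain_finset_sum]
  simp only [Finsupp.mapDomain_smul, Finsupp.mapDomain_single]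
  apply Finset.sum_involution
    (g := fun J _ => if i ∈ J then J.erase i else insert i J)
  · intro J _
    by_cases hJ : i ∈ J
    · simp only [hJ, if_true]
      have hfun : (fun j : {j : I // j ≠ i} => if (j : I) ∈ J.erase i then b j else a j)
          = fun j : {j : I // j ≠ i} => if (j : I) ∈ J then b j else a j := by
        funext j
        simp [Finset.mem_erase, j.2]
      rw [hfun, Finset.card_erase_of_mem hJ, ← add_smul]
      have : (-1 : F) ^ J.card + (-1 : F) ^ (J.card - 1) = 0 := by
        obtain ⟨n, hn⟩ : ∃ n, J.card = n + 1 :=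
          ⟨J.card - 1, (Nat.succ_pred_eq_of_pos (Finset.card_pos.2 ⟨i, hJ⟩)).symm⟩
        simp [hn, pow_succ]
      rw [this, zero_smul]
    · simp only [hJ, if_false]
      have hfun : (fun j : {j : I // j ≠ i} => if (j : I) ∈ insert i J then b j else a j)
          = fun j : {j : I // j ≠ i} => if (j : I) ∈ J then b j else a j := by
        funext j
        simp [Finset.mem_insert, j.2]
      rw [hfun, Finset.card_insert_of_notMem hJ, ← add_smul]
      simp [pow_succ]
  · intro J _ _
    by_cases hJ : i ∈ J <;> simp [hJ]
  · intro J _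
    by_cases hJ : i ∈ J <;> simp [hJ, Finset.insert_erase, Finset.erase_insert]
  · intro J _; exact Finset.mem_univ _
end

section
/- In the free F-vector space on a countably infinite set A with the symmetric group Sym(A) acting by permuting basis elements, any nonzero Sym(A)-invariant subspace contains the vector a − b for all distinct a, b ∈ A; consequently the zero-sum subspace is simple (has no proper nonzero invariant subspaces). -/
/-- In the free `F`-vector space on a countably infinite set `A` with the symmetric group
acting by permuting basis elements, any nonzero invariant subspace `W` contains `a − b` for
all distinct `a, b ∈ A`; consequently the zero-sum subspace is simple: any nonzero invariant
subspace contained in it is equal to it. -/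
theorem stmt17 {A F : Type*} [Countable A] [Infinite A] [Field F]
    (W : Submodule F (A →₀ F))
    (hinv : ∀ (π : Equiv.Perm A), ∀ v ∈ W, Finsupp.mapDomain ⇑π v ∈ W)
    (hW : W ≠ ⊥) :
    (∀ a b : A, a ≠ b → Finsupp.single a 1 - Finsupp.single b 1 ∈ W) ∧
      (W ≤ LinearMap.ker (Finsupp.linearCombination F (fun _ : A => (1 : F))) →
        W = LinearMap.ker (Finsupp.linearCombination F (fun _ : A => (1 : F)))) := by
  classical
  -- get a nonzero element of W
  obtain ⟨v, hvW, hv0⟩ : ∃ v ∈ W, v ≠ 0 := by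
    by_contra h
    push_neg at h
    exact hW (by ext x; simp only [Submodule.mem_bot]; exact ⟨fun hx => h x hx, fun hx => hx ▸ W.zero_mem⟩)
  obtain ⟨y, hy⟩ : ∃ y, v y ≠ 0 := by
    by_contra h
    push_neg at h
    exact hv0 (Finsupp.ext h)
  obtain ⟨z, hz⟩ := Infinite.exists_notMem_finset (insert y v.support)
  have hzy : z ≠ y := fun h => hz (by simp [h])
  have hvz : v z = 0 := by
    by_contra h
    exact hz (Finset.mem_insert_of_mem (Finsupp.mem_support_iff.2 h))
  -- v - (swap y z) • v = (v y) • (single y 1 - single z 1)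
  have hkey : v - Finsupp.mapDomain ⇑(Equiv.swap y z) v
      = v y • (Finsupp.single y 1 - Finsupp.single z 1) := by
    ext a
    simp only [Finsupp.sub_apply, Finsupp.smul_apply]
    rw [Finsupp.mapDomain_equiv_apply]
    simp only [Finsupp.single_apply, Equiv.symm_swap]
    rcases eq_or_ne a y with rfl | hay
    · simp [Equiv.swap_apply_left, hvz, hzy, hzy.symm]
    rcases eq_or_ne a z with rfl | haz
    · simp [Equiv.swap_apply_right, hvz, hzy, hzy.symm]
    · rw [Equiv.swap_apply_of_ne_of_ne hay haz]
      simp [hay.symm, haz.symm]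
  have hyzW : Finsupp.single y 1 - Finsupp.single z 1 ∈ W := by
    have h1 : v - Finsupp.mapDomain ⇑(Equiv.swap y z) v ∈ W :=
      W.sub_mem hvW (hinv _ v hvW)
    rw [hkey] at h1
    have := W.smul_mem (v y)⁻¹ h1
    rwa [smul_smul, inv_mul_cancel₀ hy, one_smul] at this
  -- part 1
  have part1 : ∀ a b : A, a ≠ b → Finsupp.single a 1 - Finsupp.single b 1 ∈ W := by
    intro a b hab
    set π₁ := Equiv.swap y a with hπ₁
    set π : Equiv.Perm A := π₁.trans (Equiv.swap (π₁ z) b) with hπ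
    have hπy : π y = a := by
      simp only [hπ, Equiv.trans_apply, hπ₁, Equiv.swap_apply_left]
      refine Equiv.swap_apply_of_ne_of_ne (fun h => ?_) hab
      rcases eq_or_ne z a with h' | h'
      · subst h'; rw [Equiv.swap_apply_right] at h; exact hzy h
      · rw [Equiv.swap_apply_of_ne_of_ne hzy h'] at h; exact h' h.symm
    have hπz : π z = b := by
      simp only [hπ, Equiv.trans_apply, Equiv.swap_apply_left]
    have : Finsupp.mapDomain ⇑π (Finsupp.single y 1 - Finsupp.single z 1) ∈ W :=
      hinv π _ hyzW
    have mds : ∀ (p q : A →₀ F), Finsupp.mapDomain ⇑π (p - q)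
        = Finsupp.mapDomain ⇑π p - Finsupp.mapDomain ⇑π q := fun p q => by
      simpa using (Finsupp.mapDomain.addMonoidHom (⇑π) : (A →₀ F) →+ (A →₀ F)).map_sub p q
    rwa [mds, Finsupp.mapDomain_single, Finsupp.mapDomain_single,
      hπy, hπz] at this
  refine ⟨part1, fun hle => le_antisymm hle ?_⟩
  -- ker ≤ W
  intro u hu
  rw [LinearMap.mem_ker, Finsupp.linearCombination_apply] at hu
  have hsum : ∑ a ∈ u.support, u a = 0 := by
    simpa [Finsupp.sum] using hu
  obtain ⟨b₀⟩ : Nonempty A := inferInstance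
  have hrepr : u = ∑ a ∈ u.support, u a • (Finsupp.single a 1 - Finsupp.single b₀ 1) := by
    rw [Finset.sum_congr rfl (fun a _ => smul_sub (u a) _ _), Finset.sum_sub_distrib,
      ← Finset.sum_smul, hsum, zero_smul, sub_zero]
    conv_lhs => rw [← Finsupp.sum_single u]
    rw [Finsupp.sum]
    exact Finset.sum_congr rfl fun a _ => by rw [Finsupp.smul_single', mul_one]
  rw [hrepr]
  refine Submodule.sum_mem W fun a _ => ?_
  rcases eq_or_ne a b₀ with rfl | hab
  · simp
  · exact W.smul_mem _ (part1 a b₀ hab)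
end
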